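/- For the uniform kernel K(u) = (1/2)·1{|u| ≤ 1}, the asymptotic-relative-efficiency ratio 4 d(K)/b(K), where d(K) = ∫ [K(u) − (1/2)C(u)]² du with C(u) = ∫ K(u+v)K(v) dv and b(K) = ∫ C(u)² du, is strictly greater than 1. -/

import Mathlib

/-!
The autocorrelation of the uniform kernel is the triangle `C v = max 0 (2 - |v|) / 4`: the
integrand of `C v` is `1/4` on `[-1, 1] ∩ [-1 - v, 1 - v]`, an interval of length `2 - |v|`.
Both integrands `C²` and `(K - C/2)²` are even, vanish outside `[-2, 2]` and are quadratic on
`(0, 1]` and `(1, 2]`, so `b = 2 ∫₀² ((2 - t)/4)² = 1/3` and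
`d = 2 (∫₀¹ ((2 + t)/8)² + ∫₁² ((2 - t)/8)²) = 5/24`, giving `4 d / b = 5/2`.
-/

open MeasureTheory Set

noncomputable def uniformKernel (u : ℝ) : ℝ := if |u| ≤ 1 then 1 / 2 else 0

lemma integral_indicator_Icc_mul_indicator_Icc_add (h v : ℝ) :
    ∫ u, (Icc (-h) h).indicator (1 : ℝ → ℝ) (u + v) * (Icc (-h) h).indicator 1 u =
      max 0 (2 * h - |v|) := by
  have hshift : ∀ u, (Icc (-h) h).indicator (1 : ℝ → ℝ) (u + v) =
      (Icc (-h - v) (h - v)).indicator 1 u := by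
    intro u
    simp only [indicator_apply, mem_Icc, Pi.one_apply]
    congr 1
    exact propext ⟨fun ⟨h1, h2⟩ => ⟨by linarith, by linarith⟩,
      fun ⟨h1, h2⟩ => ⟨by linarith, by linarith⟩⟩
  have hlength : min (h - v) h - max (-h - v) (-h) = 2 * h - |v| := by
    rcases le_total 0 v with hv | hv
    · rw [abs_of_nonneg hv, min_eq_left (by linarith), max_eq_right (by linarith)]; ring
    · rw [abs_of_nonpos hv, min_eq_right (by linarith), max_eq_left (by linarith)]; ring
  simp_rw [hshift, ← inter_indicator_mul, Icc_inter_Icc, Pi.one_apply, mul_one]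
  rw [integral_indicator_const _ measurableSet_Icc, Real.volume_real_Icc, smul_eq_mul, mul_one,
    hlength, max_comm]

lemma uniformKernel_autocorrelation (v : ℝ) :
    ∫ u, uniformKernel (u + v) * uniformKernel u = max 0 (2 - |v|) / 4 := by
  have hscale : ∀ u, uniformKernel (u + v) * uniformKernel u = 1 / 4 *
      ((Icc (-1) 1).indicator (1 : ℝ → ℝ) (u + v) * (Icc (-1) 1).indicator 1 u) := by
    intro u
    simp only [uniformKernel, indicator_apply, mem_Icc, abs_le, Pi.one_apply]
    split_ifs <;> norm_num
  simp_rw [hscale]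
  rw [integral_const_mul, integral_indicator_Icc_mul_indicator_Icc_add]
  ring_nf

lemma integral_comp_abs_eq_two_mul_intervalIntegral {g : ℝ → ℝ} {a : ℝ} (ha : 0 ≤ a)
    (hg : ∀ x, a < x → g x = 0) :
    ∫ x, g |x| = 2 * ∫ x in 0..a, g x := by
  rw [integral_comp_abs, intervalIntegral.integral_of_le ha,
    setIntegral_eq_of_subset_of_forall_sdiff_eq_zero measurableSet_Ioi Ioc_subset_Ioi_self]
  rintro x ⟨hx₀, hx⟩
  exact hg x (not_le.1 fun hxa => hx ⟨hx₀, hxa⟩)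

lemma intervalIntegral_eq_of_eqOn_Ioc {f g : ℝ → ℝ} {a b : ℝ} (hab : a ≤ b) (hg : Continuous g)
    (hfg : EqOn f g (Ioc a b)) :
    IntervalIntegrable f volume a b ∧ ∫ x in a..b, f x = ∫ x in a..b, g x := by
  rw [← uIoc_of_le hab] at hfg
  exact ⟨(intervalIntegrable_congr hfg).2 (hg.intervalIntegrable a b),
    intervalIntegral.integral_congr_ae (Filter.Eventually.of_forall hfg)⟩

lemma integral_sq_uniformKernel_autocorrelation :
    ∫ u : ℝ, (max 0 (2 - |u|) / 4) ^ 2 = 1 / 3 := by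
  rw [integral_comp_abs_eq_two_mul_intervalIntegral (g := fun t => (max 0 (2 - t) / 4) ^ 2)
    zero_le_two fun t ht => by simp [max_eq_left (by linarith : 2 - t ≤ 0)]]
  rw [(intervalIntegral_eq_of_eqOn_Ioc zero_le_two (g := fun t => ((2 - t) / 4) ^ 2)
    (by fun_prop) fun t ht => by simp [max_eq_right (by linarith [ht.2] : 0 ≤ 2 - t)]).2]
  simp only [div_pow, intervalIntegral.integral_div,
    intervalIntegral.integral_comp_sub_left (· ^ 2), integral_pow]
  norm_num

lemma integral_sq_uniformKernel_sub_half_autocorrelation :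
    ∫ u, (uniformKernel u - 1 / 2 * (max 0 (2 - |u|) / 4)) ^ 2 = 5 / 24 := by
  set g : ℝ → ℝ := fun t => ((if t ≤ 1 then 1 / 2 else 0) - 1 / 2 * (max 0 (2 - t) / 4)) ^ 2
  change ∫ u, g |u| = _
  rw [integral_comp_abs_eq_two_mul_intervalIntegral zero_le_two fun t ht => by
    simp [g, if_neg (by linarith : ¬ t ≤ 1), max_eq_left (by linarith : 2 - t ≤ 0)]]
  obtain ⟨hint₁, heq₁⟩ := intervalIntegral_eq_of_eqOn_Ioc zero_le_one (f := g)
    (g := fun t => ((2 + t) / 8) ^ 2) (by fun_prop) fun t ht => by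
      simp only [g, if_pos ht.2, max_eq_right (by linarith [ht.2] : 0 ≤ 2 - t)]; ring
  obtain ⟨hint₂, heq₂⟩ := intervalIntegral_eq_of_eqOn_Ioc one_le_two (f := g)
    (g := fun t => ((2 - t) / 8) ^ 2) (by fun_prop) fun t ht => by
      simp only [g, if_neg (not_le.2 ht.1), max_eq_right (by linarith [ht.2] : 0 ≤ 2 - t)]; ring
  rw [← intervalIntegral.integral_add_adjacent_intervals hint₁ hint₂, heq₁, heq₂]
  simp only [div_pow, intervalIntegral.integral_div, intervalIntegral.integral_comp_add_left (· ^ 2),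
    intervalIntegral.integral_comp_sub_left (· ^ 2), integral_pow]
  norm_num

theorem stmt_14 (K : ℝ → ℝ)
    (hK : ∀ u, K u = if |u| ≤ 1 then (1 : ℝ) / 2 else 0)
    (C : ℝ → ℝ) (hC : ∀ v, C v = ∫ u, K (u + v) * K u)
    (d b : ℝ)
    (hd : d = ∫ u, (K u - (1 / 2) * C u) ^ 2)
    (hb : b = ∫ u, C u ^ 2) :
    1 < 4 * d / b := by
  obtain rfl : K = uniformKernel := funext hK
  obtain rfl : C = fun v => max 0 (2 - |v|) / 4 :=
    funext fun v => (hC v).trans (uniformKernel_autocorrelation v)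
  rw [hd, hb]
  beta_reduce
  rw [integral_sq_uniformKernel_sub_half_autocorrelation,
    integral_sq_uniformKernel_autocorrelation]
  norm_num
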